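/- Let (κ, τ, β, π, f) be as in the binary 5-cap setup (with β, π determined recursively from κ and τ as in the context). Let u be a word and m ≥ 0, and set w_i = uH^i for 0 ≤ i ≤ m and w = uH^m. Suppose w is m-hard, i.e., for every i with 0 ≤ i ≤ m: (H0) π_{w_i} ≥ 0; (H1) κ_{w_i} ≥ 2π_{w_i} − π_u·f_i; and (H2) τ_{w_i} ≤ 5β_{w_i} + 2π_{w_i} + π_u·f_{i+1}. Then κ_w ≥ π_u·f_{m+3}. -/

import Mathlib

/-- The two letters of binary words: `H` (high supporter) and `L` (low
supporter). -/
inductive Letter : Type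
  | H : Letter
  | L : Letter
deriving DecidableEq

/-- Binary words.  The empty list is the empty word `λ`; the word `vH`
(resp. `vL`) is represented by `Letter.H :: v` (resp. `Letter.L :: v`). -/
abbrev Word : Type := List Letter

/-- The penalty `π`, defined recursively from the heights `κ` by `π_λ = 0`,
`π_{vH} = κ_v` and `π_{vL} = κ_v - π_v`. -/
def pen (κ : Word → ℝ) : Word → ℝ
  | [] => 0
  | Letter.H :: v => κ v
  | Letter.L :: v => κ v - pen κ v

/-- The quantity `β` (weight above the cone minus own height), defined
recursively by `β_λ = 0`, `β_{vH} = β_v` and `β_{vL} = β_v + π_v`. -/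
def wt (κ : Word → ℝ) : Word → ℝ
  | [] => 0
  | Letter.H :: v => wt κ v
  | Letter.L :: v => wt κ v + pen κ v

/-! Since `π_{vH} = κ_v`, (H1) at `i + 1` reads `κ_{w_{i+1}} ≥ 2κ_{w_i} - π_u·f_{i+1}`,
and `f_{i+4} = 2f_{i+3} - f_{i+1}` turns this recursion into an induction on `i`, starting from
`κ_{w_0} ≥ 2π_u = π_u·f_3`. -/

theorem Nat.fib_add_three_add_fib (n : ℕ) : Nat.fib (n + 3) + Nat.fib n = 2 * Nat.fib (n + 2) := by
  have h₂ : Nat.fib (n + 2) = Nat.fib n + Nat.fib (n + 1) := Nat.fib_add_two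
  have h₃ : Nat.fib (n + 3) = Nat.fib (n + 1) + Nat.fib (n + 2) := Nat.fib_add_two
  omega

theorem mul_fib_add_three_le_of_two_mul_sub_le {a : ℕ → ℝ} {p : ℝ} {m : ℕ} (h₀ : 2 * p ≤ a 0)
    (hsucc : ∀ i < m, 2 * a i - p * Nat.fib (i + 1) ≤ a (i + 1)) :
    p * Nat.fib (m + 3) ≤ a m := by
  induction m with
  | zero => simpa [mul_comm, show Nat.fib 3 = 2 from rfl] using h₀
  | succ n ih =>
    have hfib : (Nat.fib (n + 1 + 3) : ℝ) + Nat.fib (n + 1) = 2 * Nat.fib (n + 3) := by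
      exact_mod_cast Nat.fib_add_three_add_fib (n + 1)
    have ih' := ih fun i hi => hsucc i (hi.trans n.lt_succ_self)
    linear_combination hsucc n n.lt_succ_self + 2 * ih' + p * hfib

@[simp]
theorem pen_H_cons (κ : Word → ℝ) (v : Word) : pen κ (Letter.H :: v) = κ v := rfl

theorem hard_lemma_general (κ : Word → ℝ)
    (u : Word) (m : ℕ)
    (hH1 : ∀ i ≤ m, 2 * pen κ (List.replicate i Letter.H ++ u)
      - pen κ u * (Nat.fib i : ℝ) ≤ κ (List.replicate i Letter.H ++ u)) :
    pen κ u * (Nat.fib (m + 3) : ℝ) ≤ κ (List.replicate m Letter.H ++ u) := by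
  refine mul_fib_add_three_le_of_two_mul_sub_le (a := fun i => κ (List.replicate i Letter.H ++ u))
    ?_ fun i hi => ?_
  · simpa using hH1 0 m.zero_le
  · simpa [List.replicate_succ] using hH1 (i + 1) hi

/-- If `w = uHᵐ` is `m`-hard, i.e. for all `0 ≤ i ≤ m` the box `wᵢ = uHⁱ`
satisfies (H0) `π_{wᵢ} ≥ 0`, (H1) `κ_{wᵢ} ≥ 2π_{wᵢ} - π_u·fᵢ` and
(H2) `τ_{wᵢ} ≤ 5β_{wᵢ} + 2π_{wᵢ} + π_u·f_{i+1}`, then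
`κ_w ≥ π_u·f_{m+3}` (with `f` the Fibonacci sequence). -/
theorem hard_lemma (κ τ : Word → ℝ)
    (hτnil : τ [] = 0)
    (hτH : ∀ v : Word, τ (Letter.H :: v) = τ v + κ v)
    (u : Word) (m : ℕ)
    (hH0 : ∀ i ≤ m, 0 ≤ pen κ (List.replicate i Letter.H ++ u))
    (hH1 : ∀ i ≤ m, 2 * pen κ (List.replicate i Letter.H ++ u)
      - pen κ u * (Nat.fib i : ℝ) ≤ κ (List.replicate i Letter.H ++ u))
    (hH2 : ∀ i ≤ m, τ (List.replicate i Letter.H ++ u)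
      ≤ 5 * wt κ (List.replicate i Letter.H ++ u)
        + 2 * pen κ (List.replicate i Letter.H ++ u)
        + pen κ u * (Nat.fib (i + 1) : ℝ)) :
    pen κ u * (Nat.fib (m + 3) : ℝ) ≤ κ (List.replicate m Letter.H ++ u) :=
  hard_lemma_general κ u m hH1
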